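/- arXiv:math/0102217 — 2 statements merged into one kernel-verified Lean document; each statement's English description precedes it below -/
import Mathlib

section
/- Let $\underline a_i$ ($1\le i\le m$) and $\underline a_n$ be monomial ideals in $\mathbb{C}[X_1,\dots,X_r]$ with $i\mid n$ and $\underline a_i^{n/i}\subseteq\underline a_n$ for all $i$, and similarly $\underline b_i,\underline b_n$ in $\mathbb{C}[Y_1,\dots,Y_s]$. Let $\phi:\mathbb{R}^r\to\mathbb{R}$ and $\psi:\mathbb{R}^s\to\mathbb{R}$ be linear maps with $\phi(w)\ge 1$ whenever $X^w\in\underline a_n$ and $\psi(w)\ge 1$ whenever $Y^w\in\underline b_n$. Then for every monomial $X^{w_1}Y^{w_2}$ in the ideal $p^{-1}\underline a_m+\sum_{i=1}^{m-1}p^{-1}\underline a_i\cdot q^{-1}\underline b_{m-i}+q^{-1}\underline b_m$ of $\mathbb{C}[X,Y]$, one has $\phi(w_1)+\psi(w_2)\ge m/n$, provided $\phi$ and $\psi$ are nonnegative on the nonnegative orthants. -/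
/-- `X^v` as an element of `ℂ[X_1,…,X_r]`. -/
noncomputable def monoX {r : ℕ} (v : Fin r → ℕ) : MvPolynomial (Fin r) ℂ :=
  MvPolynomial.monomial (Finsupp.equivFunOnFinite.symm v) 1

/-- `X^{v₁} Y^{v₂}` as an element of `ℂ[X_1,…,X_r,Y_1,…,Y_s]`. -/
noncomputable def monoXY {r s : ℕ} (v₁ : Fin r → ℕ) (v₂ : Fin s → ℕ) :
    MvPolynomial (Fin r ⊕ Fin s) ℂ :=
  MvPolynomial.monomial (Finsupp.equivFunOnFinite.symm (Sum.elim v₁ v₂)) 1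

/-- An ideal of `ℂ[X_1,…,X_r]` is a monomial ideal if it is generated by monomials. -/
def IsMonomialIdeal {r : ℕ} (I : Ideal (MvPolynomial (Fin r) ℂ)) : Prop :=
  ∃ S : Set (Fin r → ℕ), I = Ideal.span (monoX '' S)

/-!
Give the exponent `d = (d_X, d_Y)` of a monomial of `ℂ[X, Y]` the weight `φ(d_X) + ψ(d_Y)`,
and let `J c` be the ideal spanned by the monomials of weight `≥ c`. If `X^u ∈ aᵢ`, then
`X^{(n/i) u} ∈ aᵢ^{n/i} ⊆ aₙ`, so `(n/i) φ(u) ≥ 1` and, as `(n/i) i ≤ n`, `φ(u) ≥ i/n`;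
thus `p⁻¹aᵢ ⊆ J (i/n)` and `q⁻¹bⱼ ⊆ J (j/n)`. Weights add under multiplication, so each
summand of the ideal lies in `J (m/n)`. Finally, `φ` and `ψ` being nonnegative on the
orthants makes the weight monotone, so the exponents of weight `≥ c` form an upper set and
a monomial lies in `J c` only if its own weight is `≥ c`.
-/

open MvPolynomial

section Generators

variable {r : ℕ} {φ : (Fin r → ℝ) →ₗ[ℝ] ℝ}

theorem monoX_pow (u : Fin r → ℕ) (k : ℕ) : monoX u ^ k = monoX (k • u) := by
  rw [monoX, monoX, monomial_pow, one_pow]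
  exact congrArg (monomial · 1) (by ext; simp)

theorem one_le_mul_of_monoX_mem_of_pow_le {a a' : Ideal (MvPolynomial (Fin r) ℂ)} {k : ℕ}
    (hpow : a ^ k ≤ a') (hφ : ∀ w : Fin r → ℕ, monoX w ∈ a' → 1 ≤ φ (fun j => (w j : ℝ)))
    {u : Fin r → ℕ} (hu : monoX u ∈ a) : 1 ≤ k * φ (fun j => (u j : ℝ)) := by
  have h := hφ (k • u) (monoX_pow u k ▸ hpow (Ideal.pow_mem_pow hu k))
  have hcast : (fun j => ((k • u) j : ℝ)) = (k : ℝ) • fun j => (u j : ℝ) := by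
    funext j; simp
  rwa [hcast, map_smul, smul_eq_mul] at h

theorem div_le_of_monoX_mem_of_pow_div_le {a a' : Ideal (MvPolynomial (Fin r) ℂ)} {i n : ℕ}
    (hpow : a ^ (n / i) ≤ a') (hφ : ∀ w : Fin r → ℕ, monoX w ∈ a' → 1 ≤ φ (fun j => (w j : ℝ)))
    {u : Fin r → ℕ} (hu : monoX u ∈ a) : (i : ℝ) / n ≤ φ (fun j => (u j : ℝ)) := by
  have hk := one_le_mul_of_monoX_mem_of_pow_le hpow hφ hu
  have hki : ((n / i : ℕ) : ℝ) * i ≤ n := by exact_mod_cast Nat.div_mul_le_self n i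
  have hφu : 0 < φ (fun j => (u j : ℝ)) :=
    pos_of_mul_pos_right (one_pos.trans_le hk) (Nat.cast_nonneg _)
  refine div_le_of_le_mul₀ (Nat.cast_nonneg _) hφu.le ?_
  nlinarith [mul_le_mul_of_nonneg_right hki hφu.le]

end Generators

theorem rename_inl_monoX {r s : ℕ} (u : Fin r → ℕ) :
    rename (Sum.inl : Fin r → Fin r ⊕ Fin s) (monoX u) = monoXY u 0 := by
  rw [monoX, rename_monomial, monoXY]
  refine congrArg (monomial · 1) (Finsupp.ext ?_)
  rintro (k | k)
  · rw [Finsupp.mapDomain_apply Sum.inl_injective]; simp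
  · rw [Finsupp.mapDomain_of_notMem_range _ _ (by simp)]; simp

theorem rename_inr_monoX {r s : ℕ} (v : Fin s → ℕ) :
    rename (Sum.inr : Fin s → Fin r ⊕ Fin s) (monoX v) = monoXY 0 v := by
  rw [monoX, rename_monomial, monoXY]
  refine congrArg (monomial · 1) (Finsupp.ext ?_)
  rintro (k | k)
  · rw [Finsupp.mapDomain_of_notMem_range _ _ (by simp)]; simp
  · rw [Finsupp.mapDomain_apply Sum.inr_injective]; simp

section Weight

variable {r s : ℕ} {φ : (Fin r → ℝ) →ₗ[ℝ] ℝ} {ψ : (Fin s → ℝ) →ₗ[ℝ] ℝ}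

variable (φ ψ) in
def weight (d : Fin r ⊕ Fin s →₀ ℕ) : ℝ :=
  φ (fun k => (d (.inl k) : ℝ)) + ψ (fun k => (d (.inr k) : ℝ))

theorem weight_add (d e : Fin r ⊕ Fin s →₀ ℕ) :
    weight φ ψ (d + e) = weight φ ψ d + weight φ ψ e := by
  simp only [weight, Finsupp.coe_add, Pi.add_apply, Nat.cast_add]
  rw [← Pi.add_def, ← Pi.add_def, map_add, map_add]
  ring

theorem weight_equivFunOnFinite_symm (v₁ : Fin r → ℕ) (v₂ : Fin s → ℕ) :
    weight φ ψ (Finsupp.equivFunOnFinite.symm (Sum.elim v₁ v₂)) =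
      φ (fun k => (v₁ k : ℝ)) + ψ (fun k => (v₂ k : ℝ)) := by
  simp [weight]

theorem weight_nonneg (hφ : ∀ w : Fin r → ℝ, (∀ k, 0 ≤ w k) → 0 ≤ φ w)
    (hψ : ∀ w : Fin s → ℝ, (∀ k, 0 ≤ w k) → 0 ≤ ψ w) (d : Fin r ⊕ Fin s →₀ ℕ) :
    0 ≤ weight φ ψ d :=
  add_nonneg (hφ _ fun _ => Nat.cast_nonneg _) (hψ _ fun _ => Nat.cast_nonneg _)

theorem weight_monotone (hφ : ∀ w : Fin r → ℝ, (∀ k, 0 ≤ w k) → 0 ≤ φ w)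
    (hψ : ∀ w : Fin s → ℝ, (∀ k, 0 ≤ w k) → 0 ≤ ψ w) : Monotone (weight φ ψ) := by
  intro d e hde
  rw [← add_tsub_cancel_of_le hde, weight_add]
  exact le_add_of_nonneg_right (weight_nonneg hφ hψ _)

variable (φ ψ) in
noncomputable def weightIdeal (c : ℝ) : Ideal (MvPolynomial (Fin r ⊕ Fin s) ℂ) :=
  Ideal.span ((fun d => monomial d 1) '' {d | c ≤ weight φ ψ d})

theorem monoXY_mem_weightIdeal {c : ℝ} {v₁ : Fin r → ℕ} {v₂ : Fin s → ℕ}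
    (h : c ≤ φ (fun k => (v₁ k : ℝ)) + ψ (fun k => (v₂ k : ℝ))) :
    monoXY v₁ v₂ ∈ weightIdeal φ ψ c :=
  Ideal.subset_span ⟨_, by rwa [Set.mem_ofPred_eq, weight_equivFunOnFinite_symm], rfl⟩

theorem weightIdeal_mul_le (c c' : ℝ) :
    weightIdeal φ ψ c * weightIdeal φ ψ c' ≤ weightIdeal φ ψ (c + c') := by
  rw [weightIdeal, weightIdeal, Ideal.span_mul_span', Ideal.span_le]
  rintro _ ⟨_, ⟨d, hd, rfl⟩, _, ⟨e, he, rfl⟩, rfl⟩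
  refine Ideal.subset_span ⟨d + e, ?_, by simp [monomial_mul]⟩
  simp only [Set.mem_ofPred_eq, weight_add] at hd he ⊢
  linarith

theorem map_rename_inl_le_weightIdeal {I : Ideal (MvPolynomial (Fin r) ℂ)}
    (hI : IsMonomialIdeal I) {c : ℝ}
    (h : ∀ u : Fin r → ℕ, monoX u ∈ I → c ≤ φ (fun k => (u k : ℝ))) :
    I.map (rename (Sum.inl : Fin r → Fin r ⊕ Fin s)).toRingHom ≤ weightIdeal φ ψ c := by
  obtain ⟨S, rfl⟩ := hI
  rw [Ideal.map_span, Ideal.span_le]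
  rintro _ ⟨_, ⟨u, hu, rfl⟩, rfl⟩
  refine rename_inl_monoX u ▸ monoXY_mem_weightIdeal ?_
  simpa [← Pi.zero_def] using h u (Ideal.subset_span ⟨u, hu, rfl⟩)

theorem map_rename_inr_le_weightIdeal {I : Ideal (MvPolynomial (Fin s) ℂ)}
    (hI : IsMonomialIdeal I) {c : ℝ}
    (h : ∀ v : Fin s → ℕ, monoX v ∈ I → c ≤ ψ (fun k => (v k : ℝ))) :
    I.map (rename (Sum.inr : Fin s → Fin r ⊕ Fin s)).toRingHom ≤ weightIdeal φ ψ c := by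
  obtain ⟨S, rfl⟩ := hI
  rw [Ideal.map_span, Ideal.span_le]
  rintro _ ⟨_, ⟨v, hv, rfl⟩, rfl⟩
  refine rename_inr_monoX v ▸ monoXY_mem_weightIdeal ?_
  simpa [← Pi.zero_def] using h v (Ideal.subset_span ⟨v, hv, rfl⟩)

theorem le_of_monoXY_mem_weightIdeal (hφ : ∀ w : Fin r → ℝ, (∀ k, 0 ≤ w k) → 0 ≤ φ w)
    (hψ : ∀ w : Fin s → ℝ, (∀ k, 0 ≤ w k) → 0 ≤ ψ w) {c : ℝ} {v₁ : Fin r → ℕ}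
    {v₂ : Fin s → ℕ} (h : monoXY v₁ v₂ ∈ weightIdeal φ ψ c) :
    c ≤ φ (fun k => (v₁ k : ℝ)) + ψ (fun k => (v₂ k : ℝ)) := by
  rw [weightIdeal, monoXY, mem_ideal_span_monomial_image] at h
  obtain ⟨d, hd, hle⟩ :=
    h (Finsupp.equivFunOnFinite.symm (Sum.elim v₁ v₂)) (by simp [support_monomial])
  rw [← weight_equivFunOnFinite_symm]
  exact hd.trans (weight_monotone hφ hψ hle)

end Weight

theorem phi_add_psi_ge_m_div_n_general
    {r s : ℕ} (m n : ℕ) (hm : 0 < m)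
    (a : ℕ → Ideal (MvPolynomial (Fin r) ℂ)) (b : ℕ → Ideal (MvPolynomial (Fin s) ℂ))
    (hamono : ∀ i, IsMonomialIdeal (a i)) (hbmono : ∀ i, IsMonomialIdeal (b i))
    (hapow : ∀ i, 1 ≤ i → i ≤ m → a i ^ (n / i) ≤ a n)
    (hbpow : ∀ i, 1 ≤ i → i ≤ m → b i ^ (n / i) ≤ b n)
    (φ : (Fin r → ℝ) →ₗ[ℝ] ℝ) (ψ : (Fin s → ℝ) →ₗ[ℝ] ℝ)
    (hφ : ∀ w : Fin r → ℕ, monoX w ∈ a n → 1 ≤ φ (fun k => (w k : ℝ)))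
    (hψ : ∀ w : Fin s → ℕ, monoX w ∈ b n → 1 ≤ ψ (fun k => (w k : ℝ)))
    (hφpos : ∀ w : Fin r → ℝ, (∀ k, 0 ≤ w k) → 0 ≤ φ w)
    (hψpos : ∀ w : Fin s → ℝ, (∀ k, 0 ≤ w k) → 0 ≤ ψ w) :
    ∀ (w₁ : Fin r → ℕ) (w₂ : Fin s → ℕ),
      monoXY w₁ w₂ ∈
        (a m).map (MvPolynomial.rename (Sum.inl : Fin r → Fin r ⊕ Fin s)).toRingHom ⊔
        (⨆ (i : ℕ) (_ : i ∈ Finset.Ioo 0 m),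
          (a i).map (MvPolynomial.rename (Sum.inl : Fin r → Fin r ⊕ Fin s)).toRingHom *
          (b (m - i)).map (MvPolynomial.rename (Sum.inr : Fin s → Fin r ⊕ Fin s)).toRingHom) ⊔
        (b m).map (MvPolynomial.rename (Sum.inr : Fin s → Fin r ⊕ Fin s)).toRingHom →
      (m : ℝ) / n ≤ φ (fun k => (w₁ k : ℝ)) + ψ (fun k => (w₂ k : ℝ)) := by
  intro w₁ w₂ hw
  have ha : ∀ i, 1 ≤ i → i ≤ m →
      (a i).map (rename (Sum.inl : Fin r → Fin r ⊕ Fin s)).toRingHom ≤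
        weightIdeal φ ψ (i / n) := fun i hi him ↦
    map_rename_inl_le_weightIdeal (hamono i) fun _ hu ↦
      div_le_of_monoX_mem_of_pow_div_le (hapow i hi him) hφ hu
  have hb : ∀ i, 1 ≤ i → i ≤ m →
      (b i).map (rename (Sum.inr : Fin s → Fin r ⊕ Fin s)).toRingHom ≤
        weightIdeal φ ψ (i / n) := fun i hi him ↦
    map_rename_inr_le_weightIdeal (hbmono i) fun _ hv ↦
      div_le_of_monoX_mem_of_pow_div_le (hbpow i hi him) hψ hv
  refine le_of_monoXY_mem_weightIdeal hφpos hψpos (sup_le (sup_le (ha m hm le_rfl)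
    (iSup₂_le fun i hi ↦ ?_)) (hb m hm le_rfl) hw)
  obtain ⟨hi0, him⟩ := Finset.mem_Ioo.mp hi
  calc _ ≤ weightIdeal φ ψ (i / n) * weightIdeal φ ψ ((m - i : ℕ) / n) :=
        Ideal.mul_mono (ha i hi0 him.le) (hb (m - i) (by omega) (by omega))
    _ ≤ weightIdeal φ ψ (i / n + (m - i : ℕ) / n) := weightIdeal_mul_le _ _
    _ = weightIdeal φ ψ (m / n) := by rw [Nat.cast_sub him.le]; ring_nf

/-- The main computation of Lemma 1.3: if `aᵢ^{n/i} ⊆ aₙ`, `bᵢ^{n/i} ⊆ bₙ`, and the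
linear maps `φ`, `ψ` are `≥ 1` on exponents of `aₙ`, `bₙ` (and nonnegative on the
orthants), then `φ(w₁) + ψ(w₂) ≥ m/n` for every monomial `X^{w₁} Y^{w₂}` in
`p⁻¹aₘ + ∑ᵢ p⁻¹aᵢ · q⁻¹b_{m-i} + q⁻¹bₘ`. -/
theorem phi_add_psi_ge_m_div_n
    {r s : ℕ} (m n : ℕ) (hm : 0 < m) (hn : 0 < n)
    (a : ℕ → Ideal (MvPolynomial (Fin r) ℂ)) (b : ℕ → Ideal (MvPolynomial (Fin s) ℂ))
    (hamono : ∀ i, IsMonomialIdeal (a i)) (hbmono : ∀ i, IsMonomialIdeal (b i))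
    (hdvd : ∀ i, 1 ≤ i → i ≤ m → i ∣ n)
    (hapow : ∀ i, 1 ≤ i → i ≤ m → a i ^ (n / i) ≤ a n)
    (hbpow : ∀ i, 1 ≤ i → i ≤ m → b i ^ (n / i) ≤ b n)
    (φ : (Fin r → ℝ) →ₗ[ℝ] ℝ) (ψ : (Fin s → ℝ) →ₗ[ℝ] ℝ)
    (hφ : ∀ w : Fin r → ℕ, monoX w ∈ a n → 1 ≤ φ (fun k => (w k : ℝ)))
    (hψ : ∀ w : Fin s → ℕ, monoX w ∈ b n → 1 ≤ ψ (fun k => (w k : ℝ)))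
    (hφpos : ∀ w : Fin r → ℝ, (∀ k, 0 ≤ w k) → 0 ≤ φ w)
    (hψpos : ∀ w : Fin s → ℝ, (∀ k, 0 ≤ w k) → 0 ≤ ψ w) :
    ∀ (w₁ : Fin r → ℕ) (w₂ : Fin s → ℕ),
      monoXY w₁ w₂ ∈
        (a m).map (MvPolynomial.rename (Sum.inl : Fin r → Fin r ⊕ Fin s)).toRingHom ⊔
        (⨆ (i : ℕ) (_ : i ∈ Finset.Ioo 0 m),
          (a i).map (MvPolynomial.rename (Sum.inl : Fin r → Fin r ⊕ Fin s)).toRingHom *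
          (b (m - i)).map (MvPolynomial.rename (Sum.inr : Fin s → Fin r ⊕ Fin s)).toRingHom) ⊔
        (b m).map (MvPolynomial.rename (Sum.inr : Fin s → Fin r ⊕ Fin s)).toRingHom →
      (m : ℝ) / n ≤ φ (fun k => (w₁ k : ℝ)) + ψ (fun k => (w₂ k : ℝ)) :=
  phi_add_psi_ge_m_div_n_general m n hm a b hamono hbmono hapow hbpow φ ψ hφ hψ hφpos hψpos
end

section
/- Let $\underline a\subseteq\mathbb{C}[X_1,\dots,X_r]$ be a nonzero proper monomial ideal with Newton polyhedron $P_{\underline a}$, and let $\underline m=(X_1,\dots,X_r)$. For $c>0$ define Howald's multiplier ideal $M_c(\underline b)=(X^w: w+e\in\mathrm{Int}(c\cdot P_{\underline b}))$ for a monomial ideal $\underline b$. Then for every rational $\gamma\ge 0$, $\epsilon>0$, and integer $p\ge 1$: $M_{\gamma+\epsilon}(\underline a+\underline m^p)\subseteq M_\gamma(\underline a)+\underline m^{\max(0,[p\epsilon]-r+1)}$. -/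
open Pointwise

/-- The Newton polyhedron of a monomial ideal. -/
noncomputable def newtonPoly {r : ℕ} (a : Ideal (MvPolynomial (Fin r) ℂ)) :
    Set (Fin r → ℝ) :=
  convexHull ℝ {w | ∃ v : Fin r → ℕ, monoX v ∈ a ∧ w = fun k => (v k : ℝ)}

/-- Howald's multiplier ideal `M_c(a) = (X^w : w + e ∈ Int(c·P_a))` for `c > 0`,
with the paper's convention `M_c = (1)` for `c ≤ 0`. -/
noncomputable def howaldIdeal {r : ℕ} (a : Ideal (MvPolynomial (Fin r) ℂ)) (c : ℚ) :
    Ideal (MvPolynomial (Fin r) ℂ) :=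
  if c ≤ 0 then ⊤ else
    Ideal.span {f | ∃ v : Fin r → ℕ,
      ((fun k => (v k : ℝ)) + 1) ∈ interior ((c : ℝ) • newtonPoly a) ∧ f = monoX v}

/-!
A point `x` of `(γ + ε) • P_{a + m^p}` lying strictly below `v + 1` splits as `α y + β z` with
`y ∈ P_a`, `z ∈ P_{m^p}` and `α + β = γ + ε`; this uses that every monomial of `a + m^p` lies in
`a` or has degree at least `p`, as both ideals are monomial. If `α ≥ γ`, then `v + 1` lies
strictly above the point `γ y` of the upper set `γ • P_a`, hence in its interior. Otherwise
`β > ε`, and summing coordinates gives `|v| + r > β p > ε p`, so `X^v ∈ m^{⌊pε⌋ - r + 1}`.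
-/

open MvPolynomial

section Convex

variable {ι : Type*} [Fintype ι]

lemma natCast_add_mem_convexHull_image {A : Set (ι → ℕ)} (hA : IsUpperSet A) {v : ι → ℕ}
    (hv : v ∈ A) {d : ι → ℝ} (hd : 0 ≤ d) :
    (fun k => (v k : ℝ)) + d ∈ convexHull ℝ ((fun u k => (u k : ℝ)) '' A) := by
  classical
  obtain ⟨N, hN⟩ := exists_nat_gt (∑ k, d k)
  have hN0 : (0 : ℝ) < N := (Finset.sum_nonneg fun k _ => hd k).trans_lt hN
  -- `v + d` is a convex combination of `v` and the points `v + N eₖ`.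
  let w : Option ι → ℝ := fun o => o.elim (1 - (∑ k, d k) / N) fun k => d k / N
  let z : Option ι → ι → ℕ := fun o => o.elim v fun k => v + Pi.single k N
  have hcomb : ∑ o, w o • (fun k => (z o k : ℝ)) = (fun k => (v k : ℝ)) + d := by
    funext j
    simp only [w, z, Fintype.sum_option, Finset.sum_apply, Pi.smul_apply, Option.elim, Pi.add_apply,
      Nat.cast_add, smul_eq_mul, mul_add, Finset.sum_add_distrib, ← Finset.sum_mul]
    simp only [← Finset.sum_div, Pi.single_apply, Nat.cast_ite, CharP.cast_eq_zero, mul_ite,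
      mul_zero, Finset.sum_ite_eq, Finset.mem_univ, ↓reduceIte]
    field_simp
    ring
  rw [← hcomb]
  refine (convex_convexHull ℝ _).sum_mem (fun o _ => ?_) ?_ fun o _ => subset_convexHull ℝ _ ?_
  · cases o with
    | none => simpa [w, sub_nonneg, div_le_one hN0] using hN.le
    | some k => exact div_nonneg (hd k) hN0.le
  · simp [w, Fintype.sum_option, ← Finset.sum_div]
  · refine ⟨z o, ?_, rfl⟩
    cases o with
    | none => exact hv
    | some k => exact hA (le_add_of_nonneg_right (by positivity)) hv

lemma isUpperSet_convexHull_natCast_image {A : Set (ι → ℕ)} (hA : IsUpperSet A) :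
    IsUpperSet (convexHull ℝ ((fun u k => (u k : ℝ)) '' A)) := by
  intro x x' hxx' hx
  have htranslate : (x' - x) +ᵥ convexHull ℝ ((fun u k => (u k : ℝ)) '' A) ⊆
      convexHull ℝ ((fun u k => (u k : ℝ)) '' A) := by
    rw [← convexHull_vadd]
    refine convexHull_min ?_ (convex_convexHull ℝ _)
    rintro _ ⟨_, ⟨v, hv, rfl⟩, rfl⟩
    simp only [vadd_eq_add]
    rw [add_comm]
    exact natCast_add_mem_convexHull_image hA hv (sub_nonneg.2 hxx')
  simpa using htranslate ⟨x, hx, rfl⟩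

lemma exists_forall_lt_of_mem_interior {s : Set (ι → ℝ)} {y : ι → ℝ}
    (hy : y ∈ interior s) : ∃ x ∈ s, ∀ i, x i < y i := by
  obtain ⟨δ, hδ, hball⟩ := Metric.isOpen_iff.1 isOpen_interior y hy
  refine ⟨y - fun _ => δ / 2, interior_subset (hball ?_), fun i => by simp [hδ]⟩
  rw [Metric.mem_ball, dist_pi_lt_iff hδ]
  intro i
  simpa [abs_of_pos hδ] using hδ

lemma le_sum_of_mem_convexHull {B : Set (ι → ℝ)} {c : ℝ} (hB : ∀ z ∈ B, c ≤ ∑ k, z k)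
    {z : ι → ℝ} (hz : z ∈ convexHull ℝ B) : c ≤ ∑ k, z k :=
  convexHull_min hB (convex_halfSpace_ge ⟨fun _ _ => Finset.sum_add_distrib,
    fun _ _ => (Finset.mul_sum _ _ _).symm⟩ c) hz

end Convex

lemma exists_smul_le_of_mem_smul_convexHull_union {E : Type*} [AddCommGroup E] [PartialOrder E]
    [IsOrderedAddMonoid E] [Module ℝ E] [PosSMulMono ℝ E] [SMulPosMono ℝ E] {A B : Set E}
    (hA : A ⊆ Set.Ici 0) (hB : B ⊆ Set.Ici 0) {γ ε : ℝ} (hγ : 0 < γ) (hε : 0 ≤ ε) {x : E}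
    (hx : x ∈ (γ + ε) • convexHull ℝ (A ∪ B)) :
    (∃ y ∈ convexHull ℝ A, γ • y ≤ x) ∨ ∃ β > ε, ∃ z ∈ convexHull ℝ B, β • z ≤ x := by
  obtain ⟨u, hu, rfl⟩ := Set.mem_smul_set.1 hx
  have hA' : convexHull ℝ A ⊆ Set.Ici 0 := convexHull_min hA (convex_Ici 0)
  have hB' : convexHull ℝ B ⊆ Set.Ici 0 := convexHull_min hB (convex_Ici 0)
  rcases A.eq_empty_or_nonempty with rfl | hAne
  · exact .inr ⟨γ + ε, by linarith, u, by simpa using hu, le_rfl⟩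
  rcases B.eq_empty_or_nonempty with rfl | hBne
  · rw [Set.union_empty] at hu
    exact .inl ⟨u, hu, smul_le_smul_of_nonneg_right (by linarith) (hA' hu)⟩
  rw [convexHull_union hAne hBne, mem_convexJoin] at hu
  obtain ⟨y, hy, z, hz, s, t, hs, ht, hst, rfl⟩ := hu
  have hsplit : (γ + ε) • (s • y + t • z) = ((γ + ε) * s) • y + ((γ + ε) * t) • z := by
    rw [smul_add, mul_smul, mul_smul]
  rw [hsplit]
  rcases le_or_gt γ ((γ + ε) * s) with h | h
  · refine .inl ⟨y, hy, ?_⟩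
    calc γ • y ≤ ((γ + ε) * s) • y := smul_le_smul_of_nonneg_right h (hA' hy)
      _ ≤ _ := le_add_of_nonneg_right (smul_nonneg (by positivity) (hB' hz))
  · refine .inr ⟨(γ + ε) * t, by nlinarith, z, hz, ?_⟩
    exact le_add_of_nonneg_left (smul_nonneg (by positivity) (hA' hy))

lemma Int.toNat_floor_sub_add_one_le {α : Type*} [Ring α] [LinearOrder α] [IsStrictOrderedRing α]
    [FloorRing α] {q : α} {n r : ℕ} (h : q < n + r) : (⌊q⌋ - r + 1).toNat ≤ n := by
  have : ⌊q⌋ < n + r := Int.floor_lt.2 (by exact_mod_cast h)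
  omega

section Monomial

variable {r : ℕ}

lemma isUpperSet_setOf_monoX_mem (a : Ideal (MvPolynomial (Fin r) ℂ)) :
    IsUpperSet {v | monoX v ∈ a} := by
  intro u v huv hu
  exact Ideal.mem_of_dvd _ (monomial_dvd_monomial.2 ⟨.inr (Finsupp.le_def.2 huv), one_dvd _⟩) hu

lemma monoX_mem_pow_idealOfVars_iff {n : ℕ} {v : Fin r → ℕ} :
    monoX v ∈ idealOfVars (Fin r) ℂ ^ n ↔ n ≤ ∑ k, v k := by
  rw [monoX, monomial_mem_pow_idealOfVars_iff _ _ one_ne_zero, Finsupp.degree_eq_sum]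
  rfl

lemma monoX_mem_or_le_of_mem_sup_pow {a : Ideal (MvPolynomial (Fin r) ℂ)} {S : Set (Fin r → ℕ)}
    (hS : a = Ideal.span (monoX '' S)) {p : ℕ} {u : Fin r → ℕ}
    (hu : monoX u ∈ a ⊔ idealOfVars (Fin r) ℂ ^ p) : monoX u ∈ a ∨ p ≤ ∑ k, u k := by
  refine or_iff_not_imp_right.2 fun hlt => ?_
  obtain ⟨g, hg, h, hh, hgh⟩ := Submodule.mem_sup.1 hu
  set d := Finsupp.equivFunOnFinite.symm u
  have hh0 : h.coeff d = 0 := (mem_pow_idealOfVars_iff' p h).1 hh d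
    (by rw [Finsupp.degree_eq_sum]; exact not_le.1 hlt)
  have hgd : d ∈ g.support := by
    have hcoeff : g.coeff d + h.coeff d = 1 := by
      rw [← coeff_add, hgh]
      simp [monoX, d]
    rw [hh0, add_zero] at hcoeff
    simp [hcoeff]
  have hmon : monoX '' S = (fun s => monomial s (1 : ℂ)) '' (Finsupp.equivFunOnFinite.symm '' S) :=
    (Set.image_image (fun s => monomial s (1 : ℂ)) _ S).symm
  rw [hS, hmon] at hg
  obtain ⟨_, ⟨s, hs, rfl⟩, hsd⟩ := mem_ideal_span_monomial_image.1 hg d hgd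
  exact isUpperSet_setOf_monoX_mem a (Finsupp.le_def.1 hsd) (hS ▸ Ideal.subset_span ⟨s, hs, rfl⟩)

lemma newtonPoly_eq_convexHull (a : Ideal (MvPolynomial (Fin r) ℂ)) :
    newtonPoly a = convexHull ℝ ((fun u k => (u k : ℝ)) '' {v | monoX v ∈ a}) := by
  unfold newtonPoly
  congr 1
  ext w
  simp [eq_comm]

lemma newtonPoly_sup_pow_subset {a : Ideal (MvPolynomial (Fin r) ℂ)} {S : Set (Fin r → ℕ)}
    (hS : a = Ideal.span (monoX '' S)) (p : ℕ) :
    newtonPoly (a ⊔ idealOfVars (Fin r) ℂ ^ p) ⊆ convexHull ℝ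
      ((fun (u : Fin r → ℕ) k => (u k : ℝ)) '' {v | monoX v ∈ a} ∪
        (fun (u : Fin r → ℕ) k => (u k : ℝ)) '' {v | p ≤ ∑ k, v k}) := by
  rw [newtonPoly_eq_convexHull, ← Set.image_union]
  exact convexHull_mono (Set.image_mono fun u hu => monoX_mem_or_le_of_mem_sup_pow hS hu)

lemma add_one_mem_interior_smul_newtonPoly (a : Ideal (MvPolynomial (Fin r) ℂ)) {γ : ℝ}
    (hγ : 0 < γ) {y x : Fin r → ℝ} (hy : y ∈ newtonPoly a) (hyx : γ • y ≤ x) {v : Fin r → ℕ}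
    (hxv : ∀ k, x k < v k + 1) : (fun k => (v k : ℝ)) + 1 ∈ interior (γ • newtonPoly a) := by
  have hup : IsUpperSet (γ • newtonPoly a) := by
    rw [newtonPoly_eq_convexHull, ← Set.image_smul]
    exact (isUpperSet_convexHull_natCast_image (isUpperSet_setOf_monoX_mem a)).image
      (OrderIso.smulRight hγ)
  exact hup.mem_interior_of_forall_lt (subset_closure (Set.smul_mem_smul_set hy))
    fun k => (hyx k).trans_lt (by simpa using hxv k)

lemma natCast_mul_lt_sum_add {p : ℕ} (hp : 1 ≤ p) {ε β : ℝ} (hε : 0 ≤ ε) (hβ : ε < β)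
    {z x : Fin r → ℝ}
    (hz : z ∈ convexHull ℝ ((fun (u : Fin r → ℕ) k => (u k : ℝ)) '' {v | p ≤ ∑ k, v k}))
    (hzx : β • z ≤ x) {v : Fin r → ℕ} (hxv : ∀ k, x k < v k + 1) :
    p * ε < ∑ k, v k + r := by
  have hpz : (p : ℝ) ≤ ∑ k, z k := le_sum_of_mem_convexHull (by
    rintro _ ⟨u, hu, rfl⟩
    show (p : ℝ) ≤ ∑ k, (u k : ℝ)
    exact_mod_cast hu) hz
  calc (p : ℝ) * ε < β * p := by
        rw [mul_comm]; exact mul_lt_mul_of_pos_right hβ (by exact_mod_cast hp)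
    _ ≤ β * ∑ k, z k := mul_le_mul_of_nonneg_left hpz (by linarith)
    _ = ∑ k, (β • z) k := by simp [Finset.mul_sum]
    _ ≤ ∑ k, x k := Finset.sum_le_sum fun k _ => hzx k
    _ ≤ ∑ k, ((v k : ℝ) + 1) := Finset.sum_le_sum fun k _ => (hxv k).le
    _ = ∑ k, v k + r := by simp [Finset.sum_add_distrib]

end Monomial

theorem howaldIdeal_sum_maximal_pow_le_general
    {r : ℕ} (a : Ideal (MvPolynomial (Fin r) ℂ))
    (hamono : ∃ S : Set (Fin r → ℕ), a = Ideal.span (monoX '' S))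
    (γ ε : ℚ) (hε : 0 < ε) (p : ℕ) (hp : 1 ≤ p) :
    howaldIdeal
        (a ⊔ (Ideal.span (Set.range (MvPolynomial.X : Fin r → MvPolynomial (Fin r) ℂ))) ^ p)
        (γ + ε) ≤
      howaldIdeal a γ ⊔
        (Ideal.span (Set.range (MvPolynomial.X : Fin r → MvPolynomial (Fin r) ℂ))) ^
          (⌊(p : ℚ) * ε⌋ - r + 1).toNat := by
  rcases le_or_gt γ 0 with hγ | hγ
  · simp [howaldIdeal, hγ]
  obtain ⟨S, hS⟩ := hamono
  have hnonneg (T : Set (Fin r → ℕ)) : (fun (u : Fin r → ℕ) k => (u k : ℝ)) '' T ⊆ Set.Ici 0 := by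
    rintro _ ⟨u, -, rfl⟩ k
    positivity
  rw [howaldIdeal, if_neg (by linarith), Ideal.span_le]
  rintro _ ⟨v, hv, rfl⟩
  obtain ⟨x, hx, hxv⟩ := exists_forall_lt_of_mem_interior hv
  replace hx := Set.smul_set_mono (newtonPoly_sup_pow_subset hS p) hx
  replace hxv : ∀ k, x k < v k + 1 := by simpa using hxv
  rw [Rat.cast_add] at hx
  rcases exists_smul_le_of_mem_smul_convexHull_union (hnonneg _) (hnonneg _)
      (by exact_mod_cast hγ) (by exact_mod_cast hε.le) hx with ⟨y, hy, hyx⟩ | ⟨β, hβ, z, hz, hzx⟩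
  · refine Ideal.mem_sup_left ?_
    rw [howaldIdeal, if_neg hγ.not_ge]
    exact Ideal.subset_span ⟨v, add_one_mem_interior_smul_newtonPoly a (by exact_mod_cast hγ)
      ((newtonPoly_eq_convexHull a).symm ▸ hy) hyx hxv, rfl⟩
  · refine Ideal.mem_sup_right (monoX_mem_pow_idealOfVars_iff.2 ?_)
    refine Int.toNat_floor_sub_add_one_le ?_
    exact_mod_cast natCast_mul_lt_sum_add hp (by exact_mod_cast hε.le) hβ hz hzx hxv

/-- Proposition 2.1 for monomial ideals:
`M_{γ+ε}(a + m^p) ⊆ M_γ(a) + m^{max(0, [pε] - r + 1)}`. -/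
theorem howaldIdeal_sum_maximal_pow_le
    {r : ℕ} (a : Ideal (MvPolynomial (Fin r) ℂ))
    (hamono : ∃ S : Set (Fin r → ℕ), a = Ideal.span (monoX '' S))
    (hbot : a ≠ ⊥) (htop : a ≠ ⊤)
    (γ ε : ℚ) (hγ : 0 ≤ γ) (hε : 0 < ε) (p : ℕ) (hp : 1 ≤ p) :
    howaldIdeal
        (a ⊔ (Ideal.span (Set.range (MvPolynomial.X : Fin r → MvPolynomial (Fin r) ℂ))) ^ p)
        (γ + ε) ≤
      howaldIdeal a γ ⊔
        (Ideal.span (Set.range (MvPolynomial.X : Fin r → MvPolynomial (Fin r) ℂ))) ^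
          (⌊(p : ℚ) * ε⌋ - r + 1).toNat :=
  howaldIdeal_sum_maximal_pow_le_general a hamono γ ε hε p hp
end
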